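/- arXiv:1610.05485 — 5 statements merged into one kernel-verified Lean document; each statement's English description precedes it below -/
import Mathlib

section
/- Let (d_l) be defined by d_1 = d_2 = 5/36 and d_{l+1} = d_l + Σ_{i=1}^{l-1} d_i d_{l-i} / ((l+1)·binom(l,i)) for l ≥ 2. Then (d_l) is increasing, and if d_l ≤ d for all l where d is the limit of the sequence, then for all j ≥ 2, d_{j+1} - d_j ≤ 8d^2/(j(j+1)). -/
/-! All terms are nonnegative, so each step `d (l + 1) - d l` is a nonnegative sum, which gives
monotonicity. Bounding every product `d i * d (l - i)` by `D ^ 2` reduces the increment bound to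
`∑_{i=1}^{j-1} 1 / C(j, i) ≤ 4 / j`: apart from the two outer terms, which equal `1 / j`, each term
is at most `1 / C(j, 2) = 2 / (j (j - 1))` by unimodality of the binomial coefficients. -/

open Finset

theorem Nat.choose_le_choose_of_le_of_le_half {n a b : ℕ} (hab : a ≤ b) (hb : b ≤ n / 2) :
    n.choose a ≤ n.choose b := by
  induction b, hab using Nat.le_induction with
  | base => rfl
  | succ b _ ih => exact (ih (by omega)).trans (Nat.choose_le_succ_of_lt_half_left (by omega))

theorem Nat.choose_two_le_choose {n i : ℕ} (hi : 2 ≤ i) (hin : i + 2 ≤ n) :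
    n.choose 2 ≤ n.choose i := by
  rcases le_or_gt i (n / 2) with h | h
  · exact Nat.choose_le_choose_of_le_of_le_half hi h
  · rw [← Nat.choose_symm (by omega : i ≤ n)]
    exact Nat.choose_le_choose_of_le_of_le_half (by omega) (by omega)

theorem sum_Icc_inv_choose_le {n : ℕ} (hn : 2 ≤ n) :
    ∑ i ∈ Icc 1 (n - 1), ((n.choose i : ℝ))⁻¹ ≤ 4 / n := by
  have hn' : (2 : ℝ) ≤ n := by exact_mod_cast hn
  have hterm : ∀ i ∈ Icc 1 (n - 1), ((n.choose i : ℝ))⁻¹ ≤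
      ((n.choose 2 : ℝ))⁻¹ + if i ∈ ({1, n - 1} : Finset ℕ) then (n : ℝ)⁻¹ else 0 := by
    intro i hi
    rw [mem_Icc] at hi
    have hC2 : (0 : ℝ) < n.choose 2 := by exact_mod_cast Nat.choose_pos hn
    split_ifs with hout
    · have hCi : n.choose i = n := by
        rcases mem_insert.1 hout with rfl | hout
        · exact Nat.choose_one_right n
        · rw [mem_singleton.1 hout, Nat.choose_symm (by omega), Nat.choose_one_right]
      rw [hCi]
      linarith [inv_pos.2 hC2]
    · simp only [mem_insert, mem_singleton, not_or] at hout
      rw [add_zero]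
      gcongr
      exact_mod_cast Nat.choose_two_le_choose (by omega) (by omega)
  have hcard : #(Icc 1 (n - 1) ∩ {1, n - 1}) ≤ 2 :=
    (card_le_card inter_subset_right).trans card_le_two
  calc ∑ i ∈ Icc 1 (n - 1), ((n.choose i : ℝ))⁻¹
      ≤ ∑ i ∈ Icc 1 (n - 1),
          (((n.choose 2 : ℝ))⁻¹ + if i ∈ ({1, n - 1} : Finset ℕ) then (n : ℝ)⁻¹ else 0) :=
        sum_le_sum hterm
    _ = (n - 1) * ((n.choose 2 : ℝ))⁻¹ + #(Icc 1 (n - 1) ∩ {1, n - 1}) * (n : ℝ)⁻¹ := by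
        rw [sum_add_distrib, sum_ite_mem, sum_const, sum_const, Nat.card_Icc, nsmul_eq_mul,
          nsmul_eq_mul, Nat.add_sub_cancel, Nat.cast_sub (by omega), Nat.cast_one]
    _ ≤ (n - 1) * ((n.choose 2 : ℝ))⁻¹ + 2 * (n : ℝ)⁻¹ := by
        gcongr
        exact_mod_cast hcard
    _ = 4 / n := by
        have : (n : ℝ) - 1 ≠ 0 := by linarith
        rw [Nat.cast_choose_two]
        field_simp
        ring

noncomputable def wrightIncrement (d : ℕ → ℝ) (l : ℕ) : ℝ :=
  ∑ i ∈ Icc 1 (l - 1), d i * d (l - i) / (((l : ℝ) + 1) * (l.choose i))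

section Wright

variable {d : ℕ → ℝ}

theorem wrightIncrement_nonneg {l : ℕ} (hd : ∀ i ∈ Icc 1 (l - 1), 0 ≤ d i) :
    0 ≤ wrightIncrement d l := by
  refine sum_nonneg fun i hi => ?_
  have hi' := mem_Icc.1 hi
  have hli : l - i ∈ Icc 1 (l - 1) := mem_Icc.2 ⟨by omega, by omega⟩
  exact div_nonneg (mul_nonneg (hd i hi) (hd _ hli)) (by positivity)

theorem wright_nonneg (h1 : 0 ≤ d 1) (h2 : 0 ≤ d 2)
    (hrec : ∀ l ≥ 2, d (l + 1) = d l + wrightIncrement d l) : ∀ l ≥ 1, 0 ≤ d l := by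
  intro l hl
  induction l using Nat.strong_induction_on with
  | _ l ih =>
    match l, hl with
    | 1, _ => exact h1
    | 2, _ => exact h2
    | m + 3, _ =>
      rw [hrec (m + 2) (by omega)]
      have hinc : 0 ≤ wrightIncrement d (m + 2) := wrightIncrement_nonneg fun i hi => by
        obtain ⟨hi1, him⟩ := mem_Icc.1 hi
        exact ih i (by omega) hi1
      linarith [ih (m + 2) (by omega) (by omega)]

theorem wrightIncrement_le {D : ℝ} {l : ℕ} (hl : 2 ≤ l) (hd : ∀ i ≥ 1, 0 ≤ d i)
    (hD : ∀ i ≥ 1, d i ≤ D) : wrightIncrement d l ≤ 4 * D ^ 2 / (l * (l + 1)) := by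
  have hD0 : 0 ≤ D := (hd 1 le_rfl).trans (hD 1 le_rfl)
  have hterm : ∀ i ∈ Icc 1 (l - 1), d i * d (l - i) / (((l : ℝ) + 1) * (l.choose i)) ≤
      D ^ 2 / ((l : ℝ) + 1) * ((l.choose i : ℝ))⁻¹ := by
    intro i hi
    have hi' := mem_Icc.1 hi
    have hprod : d i * d (l - i) ≤ D ^ 2 := by
      rw [sq]
      exact mul_le_mul (hD i hi'.1) (hD _ (by omega)) (hd _ (by omega)) hD0
    rw [← div_eq_mul_inv, div_div]
    gcongr
  calc wrightIncrement d l
      ≤ ∑ i ∈ Icc 1 (l - 1), D ^ 2 / ((l : ℝ) + 1) * ((l.choose i : ℝ))⁻¹ := sum_le_sum hterm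
    _ = D ^ 2 / ((l : ℝ) + 1) * ∑ i ∈ Icc 1 (l - 1), ((l.choose i : ℝ))⁻¹ := (mul_sum ..).symm
    _ ≤ D ^ 2 / ((l : ℝ) + 1) * (4 / l) := by gcongr; exact sum_Icc_inv_choose_le hl
    _ = 4 * D ^ 2 / (l * (l + 1)) := by
        have : (l : ℝ) ≠ 0 := by positivity
        field_simp

end Wright

theorem stmt1_general (d : ℕ → ℝ) (h1 : d 1 = 5 / 36) (h2 : d 2 = 5 / 36)
    (hrec : ∀ l ≥ 2, d (l + 1) =
      d l + ∑ i ∈ Finset.Icc 1 (l - 1), d i * d (l - i) / (((l : ℝ) + 1) * (l.choose i)))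
    (D : ℝ) (hD : ∀ l ≥ 1, d l ≤ D) :
    (∀ l ≥ 1, d l ≤ d (l + 1)) ∧
      (∀ j ≥ 2, d (j + 1) - d j ≤ 8 * D ^ 2 / ((j : ℝ) * ((j : ℝ) + 1))) := by
  change ∀ l ≥ 2, d (l + 1) = d l + wrightIncrement d l at hrec
  have hd : ∀ l ≥ 1, 0 ≤ d l := wright_nonneg (by rw [h1]; norm_num) (by rw [h2]; norm_num) hrec
  refine ⟨fun l hl => ?_, fun j hj => ?_⟩
  · rcases (show l = 1 ∨ 2 ≤ l by omega) with rfl | hl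
    · rw [h1, h2]
    · rw [hrec l hl]
      linarith [wrightIncrement_nonneg (l := l) fun i hi => hd i (mem_Icc.1 hi).1]
  · rw [hrec j hj, add_sub_cancel_left]
    calc wrightIncrement d j ≤ 4 * D ^ 2 / (j * (j + 1)) := wrightIncrement_le hj hd hD
      _ ≤ 8 * D ^ 2 / (j * (j + 1)) := by gcongr; norm_num

/-- Wright's sequence `d_l` (with `d_1 = d_2 = 5/36` and the quadratic recursion)
is increasing, and if `D` bounds the sequence (e.g. `D` is its limit), then
`d_{j+1} - d_j ≤ 8 D² / (j(j+1))` for all `j ≥ 2`. -/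
theorem stmt1 (d : ℕ → ℝ) (h1 : d 1 = 5 / 36) (h2 : d 2 = 5 / 36)
    (hrec : ∀ l ≥ 2, d (l + 1) =
      d l + ∑ i ∈ Finset.Icc 1 (l - 1), d i * d (l - i) / (((l : ℝ) + 1) * (l.choose i)))
    (D : ℝ) (hlim : Filter.Tendsto d Filter.atTop (nhds D))
    (hD : ∀ l ≥ 1, d l ≤ D) :
    (∀ l ≥ 1, d l ≤ d (l + 1)) ∧
      (∀ j ≥ 2, d (j + 1) - d j ≤ 8 * D ^ 2 / ((j : ℝ) * ((j : ℝ) + 1))) :=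
  stmt1_general d h1 h2 hrec D hD
end

section
/- Let a ≥ 1 and let x ∈ [a^3/12 · (1 − a^{−4/3}), a^3/12 · (1 + a^{−4/3})], and set y = 12x/a^3 − 1. Then (e·a^3/(12x))^{x/2} = exp(a^3/24 − a^3 y^2/48 + E) where |E| ≤ C/a for an absolute constant C. -/
/-!
Writing `t = 12x/a³ = 1 + y`, the left-hand side is `(e/t)^(a³t/24) = exp (a³/24 · (t - t log t))`,
so the error is `E = -a³/24 · ((1+y) log (1+y) - y - y²/2)`. This remainder is `O(|y|³)` uniformly
for `|y| ≤ 1`, and `|y| ≤ a^{-4/3}` gives `|E| = O(a³ · a⁻⁴) = O(1/a)`.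
-/

open Real

lemma mul_log_le_mul_sub_one {t : ℝ} (ht : 0 ≤ t) : t * log t ≤ t * (t - 1) := by
  rcases ht.eq_or_lt with rfl | ht
  · simp
  · exact mul_le_mul_of_nonneg_left (log_le_sub_one_of_pos ht) ht.le

lemma abs_one_add_mul_log_one_add_sub_le_sq {y : ℝ} (hy : -1 ≤ y) :
    |(1 + y) * log (1 + y) - (y + y ^ 2 / 2)| ≤ y ^ 2 / 2 := by
  have h0 : 0 ≤ 1 + y := by linarith
  have hlo := self_sub_one_le_mul_log h0
  have hhi := mul_log_le_mul_sub_one h0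
  rw [abs_le]
  constructor <;> nlinarith

lemma abs_log_one_add_sub_le {y : ℝ} (hy : |y| ≤ 1 / 2) :
    |log (1 + y) - (y - y ^ 2 / 2)| ≤ 2 * |y| ^ 3 := by
  have h := abs_log_sub_add_sum_range_le (x := -y) (by rw [abs_neg]; linarith) 2
  norm_num [Finset.sum_range_succ] at h
  have hdiv : |y| ^ 3 / (1 - |y|) ≤ 2 * |y| ^ 3 := by
    rw [div_le_iff₀ (by linarith)]
    nlinarith [pow_nonneg (abs_nonneg y) 3]
  calc |log (1 + y) - (y - y ^ 2 / 2)| = |-y + y ^ 2 / 2 + log (1 + y)| := by ring_nf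
    _ ≤ 2 * |y| ^ 3 := h.trans hdiv

lemma abs_one_add_mul_log_one_add_sub_le_of_abs_le_half {y : ℝ} (hy : |y| ≤ 1 / 2) :
    |(1 + y) * log (1 + y) - (y + y ^ 2 / 2)| ≤ 4 * |y| ^ 3 := by
  set r := log (1 + y) - (y - y ^ 2 / 2) with hr
  have hr_le := abs_log_one_add_sub_le hy
  have h_one_add : |1 + y| ≤ 3 / 2 := (abs_add_le _ _).trans (by norm_num; linarith)
  calc |(1 + y) * log (1 + y) - (y + y ^ 2 / 2)| = |(1 + y) * r - y ^ 3 / 2| := by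
        rw [hr]; ring_nf
    _ ≤ |1 + y| * |r| + |y| ^ 3 / 2 := by
        refine (abs_sub _ _).trans ?_
        rw [abs_mul, abs_div, abs_pow, abs_two]
    _ ≤ 3 / 2 * (2 * |y| ^ 3) + |y| ^ 3 / 2 := by gcongr
    _ ≤ 4 * |y| ^ 3 := by linarith [pow_nonneg (abs_nonneg y) 3]

lemma abs_one_add_mul_log_one_add_sub_le {y : ℝ} (hy : |y| ≤ 1) :
    |(1 + y) * log (1 + y) - (y + y ^ 2 / 2)| ≤ 4 * |y| ^ 3 := by
  rcases le_or_gt |y| (1 / 2) with h | h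
  · exact abs_one_add_mul_log_one_add_sub_le_of_abs_le_half h
  · calc _ ≤ y ^ 2 / 2 := abs_one_add_mul_log_one_add_sub_le_sq (neg_le_of_abs_le hy)
      _ = |y| ^ 2 / 2 := by rw [sq_abs]
      _ ≤ 4 * |y| ^ 3 := by nlinarith [sq_nonneg |y|]

lemma div_rpow_mul_self {b t : ℝ} (hb : 0 < b) (ht : 0 ≤ t) (c : ℝ) :
    (b / t) ^ (c * t) = exp (c * t * (log b - log t)) := by
  rcases ht.eq_or_lt with rfl | ht
  · simp
  · rw [rpow_def_of_pos (div_pos hb ht), log_div hb.ne' ht.ne', mul_comm]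

lemma rpow_neg_four_div_three_pow_three {a : ℝ} (ha : 0 < a) :
    (a ^ (-(4 : ℝ) / 3)) ^ 3 = (a ^ 4)⁻¹ := by
  rw [← rpow_natCast (a ^ _), ← rpow_mul ha.le]
  norm_num [rpow_neg ha.le]

/-- Laplace-type expansion near the maximum: for `a ≥ 1` and
`x ∈ [a³/12 (1−a^{−4/3}), a³/12 (1+a^{−4/3})]`, setting `y = 12x/a³ − 1`,
`(e a³/(12x))^{x/2} = exp(a³/24 − a³y²/48 + E)` with `|E| ≤ C/a`
for an absolute constant `C`. -/
theorem stmt6 : ∃ C : ℝ, 0 < C ∧ ∀ a x : ℝ, 1 ≤ a →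
    a ^ 3 / 12 * (1 - a ^ (-(4 : ℝ) / 3)) ≤ x →
    x ≤ a ^ 3 / 12 * (1 + a ^ (-(4 : ℝ) / 3)) →
    ∃ E : ℝ, |E| ≤ C / a ∧
      (Real.exp 1 * a ^ 3 / (12 * x)) ^ (x / 2) =
        Real.exp (a ^ 3 / 24 - a ^ 3 * (12 * x / a ^ 3 - 1) ^ 2 / 48 + E) := by
  refine ⟨1 / 6, by norm_num, fun a x ha hlo hhi => ?_⟩
  have ha0 : 0 < a := one_pos.trans_le ha
  have ha3 : 0 < a ^ 3 := by positivity
  set ε := a ^ (-(4 : ℝ) / 3)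
  set y := 12 * x / a ^ 3 - 1 with hy
  have hx : x = a ^ 3 / 12 * (1 + y) := by rw [hy]; field_simp; ring
  have hε1 : ε ≤ 1 := rpow_le_one_of_one_le_of_nonpos ha (by norm_num)
  have hyε : |y| ≤ ε := by
    rw [hx] at hlo hhi
    exact abs_le.2 ⟨by nlinarith, by nlinarith⟩
  have hrem := abs_one_add_mul_log_one_add_sub_le (hyε.trans hε1)
  refine ⟨-(a ^ 3 / 24) * ((1 + y) * log (1 + y) - (y + y ^ 2 / 2)), ?_, ?_⟩
  · calc _ = a ^ 3 / 24 * |(1 + y) * log (1 + y) - (y + y ^ 2 / 2)| := by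
          rw [abs_mul, abs_neg, abs_of_pos (by positivity)]
      _ ≤ a ^ 3 / 24 * (4 * ε ^ 3) := by gcongr; exact hrem.trans (by gcongr)
      _ = 1 / 6 / a := by
          rw [rpow_neg_four_div_three_pow_three ha0]; field_simp; norm_num
  · have hbase : exp 1 * a ^ 3 / (12 * x) = exp 1 / (1 + y) := by
      rw [hy, add_sub_cancel, div_div_eq_mul_div]
    have hexp : x / 2 = a ^ 3 / 24 * (1 + y) := by rw [hx]; ring
    rw [hbase, hexp, div_rpow_mul_self (exp_pos 1) (by linarith [neg_abs_le y, hyε.trans hε1]),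
      log_exp]
    congr 1
    ring
end

section
/- Let λ ∈ ℝ, r ≥ 0 a constant, and G_λ(x) = x^3/8 − λx^2/2 + λ^2 x/2. For a ≥ max(1, 3λ), the improper integral ∫_a^∞ y^r e^{−G_λ(y)} dy equals (a^r / G_λ'(a)) · e^{−G_λ(a)} · (1 + E) where |E| ≤ C(r)/a^3 for a constant C(r) depending only on r. -/
/-!
Write `G = cubicPhase λ` and `G' = cubicPhaseDeriv λ`. Since `G' e^{-G} = -(e^{-G})'`,
integrating by parts with `u = y^r / G'` gives
`∫_a^∞ y^r e^{-G} = u(a) e^{-G(a)} + ∫_a^∞ u' e^{-G}`.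
For `y ≥ a ≥ max(1, 3λ)` one has `G'(y) ≥ y²/11` and `G''(y) y ≤ 11 G'(y)`, hence
`|u'(y)| ≤ (11r + 121) y^r / a³`: the remainder is at most `(11r + 121)/a³` times the integral
itself. The integral in turn is at most a constant `c(r)` times the leading term, because the
convexity of `G` on `[a, ∞)` gives `G(y) ≥ G(a) + G'(a)(y - a)`, which reduces the integral to
Gamma integrals at rate `G'(a) ≥ 1/11`.
-/

open MeasureTheory Set Real Filter Topology

lemma add_rpow_le_two_rpow_mul_add {x y r : ℝ} (hx : 0 ≤ x) (hy : 0 ≤ y) (hr : 0 ≤ r) :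
    (x + y) ^ r ≤ 2 ^ r * (x ^ r + y ^ r) := by
  wlog hyx : y ≤ x generalizing x y
  · simpa only [add_comm] using this hy hx (le_of_not_ge hyx)
  calc (x + y) ^ r ≤ (2 * x) ^ r := by gcongr; linarith
    _ = 2 ^ r * x ^ r := mul_rpow zero_le_two hx
    _ ≤ 2 ^ r * (x ^ r + y ^ r) := by have := rpow_nonneg hy r; gcongr; linarith

lemma setIntegral_Ioi_comp_sub (f : ℝ → ℝ) (a : ℝ) :
    ∫ y in Ioi a, f (y - a) = ∫ s in Ioi 0, f s := by
  have h := (measurePreserving_sub_right volume a).setIntegral_preimage_emb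
    (measurableEmbedding_subRight a) f (Ioi 0)
  rwa [show (· - a) ⁻¹' Ioi (0 : ℝ) = Ioi a by ext; simp] at h

lemma IntegrableOn.comp_sub_Ioi {f : ℝ → ℝ} (a : ℝ) (hf : IntegrableOn f (Ioi 0)) :
    IntegrableOn (fun y => f (y - a)) (Ioi a) := by
  have h := (measurePreserving_sub_right volume a).integrableOn_comp_preimage
    (measurableEmbedding_subRight a) (f := f) (s := Ioi 0)
  rw [show (· - a) ⁻¹' Ioi (0 : ℝ) = Ioi a by ext; simp] at h
  exact h.2 hf

lemma integrableOn_one_add_rpow_mul_exp_neg_mul {r β : ℝ} (hr : -1 < r) (hβ : 0 < β) :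
    IntegrableOn (fun s => (1 + s ^ r) * exp (-(β * s))) (Ioi 0) := by
  have h1 := integrableOn_rpow_mul_exp_neg_mul_rpow (by norm_num : (-1 : ℝ) < 0) one_pos hβ
  have h2 := integrableOn_rpow_mul_exp_neg_mul_rpow hr one_pos hβ
  simp only [rpow_zero, rpow_one, one_mul, neg_mul] at h1 h2
  exact (h1.add h2).congr_fun (fun s _ => by simp only [Pi.add_apply]; ring) measurableSet_Ioi

lemma integral_one_add_rpow_mul_exp_neg_mul_le {r β c : ℝ} (hr : 0 ≤ r) (hβ : 0 < β)
    (hcβ : 1 ≤ c * β) :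
    ∫ s in Ioi 0, (1 + s ^ r) * exp (-(β * s)) ≤ (1 + c ^ r * Gamma (r + 1)) / β := by
  have h1 := integrableOn_rpow_mul_exp_neg_mul_rpow (by norm_num : (-1 : ℝ) < 0) one_pos hβ
  have h2 := integrableOn_rpow_mul_exp_neg_mul_rpow (by linarith : -1 < r) one_pos hβ
  simp only [rpow_zero, rpow_one, one_mul, neg_mul] at h1 h2
  have hinv : 1 / β ≤ c := by rw [div_le_iff₀ hβ]; linarith
  have hΓ := integral_rpow_mul_exp_neg_mul_Ioi (by linarith : 0 < r + 1) hβ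
  have hexp := integral_rpow_mul_exp_neg_mul_Ioi one_pos hβ
  simp only [add_sub_cancel_right, sub_self, rpow_zero, one_mul, rpow_one, Gamma_one,
    mul_one] at hΓ hexp
  calc ∫ s in Ioi 0, (1 + s ^ r) * exp (-(β * s))
      = ∫ s in Ioi 0, (exp (-(β * s)) + s ^ r * exp (-(β * s))) :=
        setIntegral_congr_fun measurableSet_Ioi fun s _ => by ring
    _ = 1 / β + (1 / β) ^ r / β * Gamma (r + 1) := by
        rw [integral_add h1 h2, hexp, hΓ, rpow_add_one (by positivity)]
        ring
    _ ≤ 1 / β + c ^ r / β * Gamma (r + 1) := by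
        have := Gamma_pos_of_pos (by linarith : 0 < r + 1)
        gcongr
    _ = (1 + c ^ r * Gamma (r + 1)) / β := by ring

lemma integral_Ioi_mul_deriv_mul_exp_neg {u u' φ φ' : ℝ → ℝ} {a : ℝ}
    (hu : ∀ y ∈ Ici a, HasDerivAt u (u' y) y) (hφ : ∀ y ∈ Ici a, HasDerivAt φ (φ' y) y)
    (hint : IntegrableOn (fun y => u y * φ' y * exp (-φ y)) (Ioi a))
    (hint' : IntegrableOn (fun y => u' y * exp (-φ y)) (Ioi a))
    (hlim : Tendsto (fun y => u y * exp (-φ y)) atTop (𝓝 0)) :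
    ∫ y in Ioi a, u y * φ' y * exp (-φ y) =
      u a * exp (-φ a) + ∫ y in Ioi a, u' y * exp (-φ y) := by
  have hderiv : ∀ y ∈ Ici a, HasDerivAt (fun x => u x * exp (-φ x))
      (u' y * exp (-φ y) - u y * φ' y * exp (-φ y)) y := fun y hy =>
    ((hu y hy).mul (hφ y hy).neg.exp).congr_deriv (by simp only [Pi.neg_apply]; ring)
  have h := integral_Ioi_of_hasDerivAt_of_tendsto' hderiv (hint'.sub hint) hlim
  rw [integral_sub hint' hint] at h
  linarith

lemma exists_eq_mul_one_add_of_abs_sub_le {I L ε c : ℝ} (hL : 0 < L) (hε : 0 ≤ ε)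
    (hrem : |I - L| ≤ ε * I) (hI : I ≤ c * L) : ∃ E, |E| ≤ ε * c ∧ I = L * (1 + E) := by
  refine ⟨(I - L) / L, ?_, by field_simp; ring⟩
  rw [abs_div, abs_of_pos hL, div_le_iff₀ hL]
  calc |I - L| ≤ ε * I := hrem
    _ ≤ ε * (c * L) := mul_le_mul_of_nonneg_left hI hε
    _ = ε * c * L := by ring

noncomputable def cubicPhase (lam y : ℝ) : ℝ := y ^ 3 / 8 - lam * y ^ 2 / 2 + lam ^ 2 * y / 2

noncomputable def cubicPhaseDeriv (lam y : ℝ) : ℝ := 3 * y ^ 2 / 8 - lam * y + lam ^ 2 / 2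

noncomputable def remainderWeight (r lam y : ℝ) : ℝ :=
  (r / (y * cubicPhaseDeriv lam y) - (3 * y / 4 - lam) / cubicPhaseDeriv lam y ^ 2) * y ^ r

section CubicPhase

variable {r lam a y : ℝ}

lemma hasDerivAt_cubicPhase (lam y : ℝ) :
    HasDerivAt (cubicPhase lam) (cubicPhaseDeriv lam y) y := by
  have h := (((hasDerivAt_pow 3 y).div_const 8).sub
    (((hasDerivAt_pow 2 y).const_mul lam).div_const 2)).add
    (((hasDerivAt_id y).const_mul (lam ^ 2)).div_const 2)
  exact h.congr_deriv (by simp only [cubicPhaseDeriv]; push_cast; ring)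

lemma hasDerivAt_cubicPhaseDeriv (lam y : ℝ) :
    HasDerivAt (cubicPhaseDeriv lam) (3 * y / 4 - lam) y := by
  have h := ((((hasDerivAt_pow 2 y).const_mul 3).div_const 8).sub
    ((hasDerivAt_id y).const_mul lam)).add_const (lam ^ 2 / 2)
  exact h.congr_deriv (by push_cast; ring)

lemma continuous_cubicPhase (lam : ℝ) : Continuous (cubicPhase lam) :=
  continuous_iff_continuousAt.2 fun y => (hasDerivAt_cubicPhase lam y).continuousAt

lemma continuous_cubicPhaseDeriv (lam : ℝ) : Continuous (cubicPhaseDeriv lam) :=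
  continuous_iff_continuousAt.2 fun y => (hasDerivAt_cubicPhaseDeriv lam y).continuousAt

lemma sq_div_eleven_le_cubicPhaseDeriv (hy : 0 ≤ y) (hlam : 3 * lam ≤ y) :
    y ^ 2 / 11 ≤ cubicPhaseDeriv lam y := by
  unfold cubicPhaseDeriv
  nlinarith [mul_nonneg hy (by linarith : (0 : ℝ) ≤ y - 3 * lam), sq_nonneg (y - 3 * lam)]

lemma cubicPhaseDeriv_pos (hy : 0 < y) (hlam : 3 * lam ≤ y) : 0 < cubicPhaseDeriv lam y :=
  (by positivity : 0 < y ^ 2 / 11).trans_le (sq_div_eleven_le_cubicPhaseDeriv hy.le hlam)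

lemma mul_le_eleven_mul_cubicPhaseDeriv (hy : 0 ≤ y) (hlam : 3 * lam ≤ y) :
    (3 * y / 4 - lam) * y ≤ 11 * cubicPhaseDeriv lam y := by
  unfold cubicPhaseDeriv
  nlinarith [mul_nonneg hy (by linarith : (0 : ℝ) ≤ y - 3 * lam), sq_nonneg lam]

lemma cube_div_72_le_cubicPhase (hy : 0 ≤ y) (hlam : 3 * lam ≤ y) :
    y ^ 3 / 72 ≤ cubicPhase lam y := by
  unfold cubicPhase
  nlinarith [mul_nonneg hy (sq_nonneg (y - 3 * lam)), mul_nonneg hy (sq_nonneg (y - 2 * lam))]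

lemma cubicPhase_add_cubicPhaseDeriv_mul_le (hlam : lam ≤ 3 * a / 4) (hay : a ≤ y) :
    cubicPhase lam a + cubicPhaseDeriv lam a * (y - a) ≤ cubicPhase lam y := by
  have h : cubicPhase lam y - (cubicPhase lam a + cubicPhaseDeriv lam a * (y - a)) =
      (3 * a / 4 - lam) / 2 * (y - a) ^ 2 + (y - a) ^ 3 / 8 := by
    unfold cubicPhase cubicPhaseDeriv; ring
  have : 0 ≤ (3 * a / 4 - lam) / 2 * (y - a) ^ 2 + (y - a) ^ 3 / 8 := by
    have : 0 ≤ y - a := by linarith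
    have : 0 ≤ 3 * a / 4 - lam := by linarith
    positivity
  linarith

lemma hasDerivAt_rpow_div_cubicPhaseDeriv (hy : 0 < y) (hg : cubicPhaseDeriv lam y ≠ 0) :
    HasDerivAt (fun x => x ^ r / cubicPhaseDeriv lam x) (remainderWeight r lam y) y := by
  refine ((hasDerivAt_rpow_const (Or.inl hy.ne')).div (hasDerivAt_cubicPhaseDeriv lam y)
    hg).congr_deriv ?_
  rw [remainderWeight, rpow_sub_one hy.ne']
  field_simp

lemma abs_remainderWeight_le (hr : 0 ≤ r) (ha : 0 < a) (hlam : 3 * lam ≤ a) (hay : a ≤ y) :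
    |remainderWeight r lam y| ≤ (11 * r + 121) / a ^ 3 * y ^ r := by
  have hy : 0 < y := ha.trans_le hay
  have hlam' : 3 * lam ≤ y := hlam.trans hay
  set g := cubicPhaseDeriv lam y
  have hg : 0 < g := cubicPhaseDeriv_pos hy hlam'
  have hgy : y ^ 2 ≤ 11 * g := by linarith [sq_div_eleven_le_cubicPhaseDeriv hy.le hlam']
  have hg'y : (3 * y / 4 - lam) * y ≤ 11 * g := mul_le_eleven_mul_cubicPhaseDeriv hy.le hlam'
  have hg' : 0 ≤ 3 * y / 4 - lam := by linarith
  -- both terms are controlled by `1 / (y G') ≤ 11 / y³`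
  have hfirst : r / (y * g) ≤ 11 * r / y ^ 3 := by
    rw [div_le_div_iff₀ (by positivity) (by positivity)]
    nlinarith [mul_le_mul_of_nonneg_left hgy (by positivity : 0 ≤ r * y)]
  have hsecond : (3 * y / 4 - lam) / g ^ 2 ≤ 121 / y ^ 3 := by
    rw [div_le_div_iff₀ (by positivity) (by positivity)]
    nlinarith [mul_le_mul hg'y hgy (by positivity) (by positivity)]
  have hy3 : 1 / y ^ 3 ≤ 1 / a ^ 3 := by gcongr
  calc |remainderWeight r lam y|
      = |r / (y * g) - (3 * y / 4 - lam) / g ^ 2| * y ^ r := by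
        rw [remainderWeight, abs_mul, abs_of_pos (rpow_pos_of_pos hy r)]
    _ ≤ (r / (y * g) + (3 * y / 4 - lam) / g ^ 2) * y ^ r := by
        have : 0 ≤ r / (y * g) := by positivity
        have : 0 ≤ (3 * y / 4 - lam) / g ^ 2 := by positivity
        gcongr
        exact abs_sub_le_iff.2 ⟨by linarith, by linarith⟩
    _ ≤ (11 * r / y ^ 3 + 121 / y ^ 3) * y ^ r := by gcongr
    _ = (11 * r + 121) * (1 / y ^ 3) * y ^ r := by ring
    _ ≤ (11 * r + 121) / a ^ 3 * y ^ r := by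
        rw [mul_one_div]
        gcongr

end CubicPhase

section CubicPhaseIntegral

variable {r lam a : ℝ}

lemma integrableOn_rpow_mul_exp_neg_cubicPhase (hr : -1 < r) (ha : 0 ≤ a)
    (hlam : 3 * lam ≤ a) :
    IntegrableOn (fun y => y ^ r * exp (-cubicPhase lam y)) (Ioi a) := by
  have hdom := (integrableOn_rpow_mul_exp_neg_mul_rpow hr (by norm_num : (0 : ℝ) < 3)
    (by norm_num : (0 : ℝ) < 1 / 72)).mono_set (Ioi_subset_Ioi ha)
  refine hdom.mono' (by have := continuous_cubicPhase lam; fun_prop) ?_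
  filter_upwards [ae_restrict_mem measurableSet_Ioi] with y hy
  have hy0 : 0 ≤ y := ha.trans hy.out.le
  rw [norm_of_nonneg (by positivity)]
  gcongr
  have := cube_div_72_le_cubicPhase hy0 (hlam.trans hy.out.le)
  rw [← rpow_natCast, Nat.cast_ofNat] at this
  linarith

lemma tendsto_rpow_div_cubicPhaseDeriv_mul_exp_neg_cubicPhase (r lam : ℝ) :
    Tendsto (fun y => y ^ r / cubicPhaseDeriv lam y * exp (-cubicPhase lam y)) atTop (𝓝 0) := by
  have hdom := (tendsto_rpow_mul_exp_neg_mul_atTop_nhds_zero r (1 / 72) (by norm_num)).const_mul 11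
  rw [mul_zero] at hdom
  refine squeeze_zero' ?_ ?_ hdom
  · filter_upwards [eventually_ge_atTop 1, eventually_ge_atTop (3 * lam)] with y hy1 hlam
    have := cubicPhaseDeriv_pos (by linarith) hlam
    positivity
  · filter_upwards [eventually_ge_atTop 1, eventually_ge_atTop (3 * lam)] with y hy1 hlam
    have hg := sq_div_eleven_le_cubicPhaseDeriv (by linarith) hlam
    have hG := cube_div_72_le_cubicPhase (by linarith) hlam
    have hgpos : 0 < cubicPhaseDeriv lam y := cubicPhaseDeriv_pos (by linarith) hlam
    have hyr : 0 < y ^ r := rpow_pos_of_pos (by linarith) r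
    calc y ^ r / cubicPhaseDeriv lam y * exp (-cubicPhase lam y)
        ≤ 11 * y ^ r * exp (-(1 / 72 * y)) := by
          gcongr
          · have : 1 ≤ 11 * cubicPhaseDeriv lam y := by nlinarith
            rw [div_le_iff₀ hgpos]
            nlinarith [mul_le_mul_of_nonneg_left this hyr.le]
          · nlinarith
      _ = 11 * (y ^ r * exp (-(1 / 72) * y)) := by ring_nf

lemma abs_remainderWeight_mul_exp_neg_cubicPhase_le (hr : 0 ≤ r) (ha : 0 < a)
    (hlam : 3 * lam ≤ a) {y : ℝ} (hay : a ≤ y) :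
    |remainderWeight r lam y * exp (-cubicPhase lam y)| ≤
      (11 * r + 121) / a ^ 3 * (y ^ r * exp (-cubicPhase lam y)) := by
  rw [abs_mul, abs_exp, ← mul_assoc]
  gcongr
  exact abs_remainderWeight_le hr ha hlam hay

lemma integrableOn_remainderWeight_mul_exp_neg_cubicPhase (hr : 0 ≤ r) (ha : 0 < a)
    (hlam : 3 * lam ≤ a) :
    IntegrableOn (fun y => remainderWeight r lam y * exp (-cubicPhase lam y)) (Ioi a) := by
  refine ((integrableOn_rpow_mul_exp_neg_cubicPhase (by linarith : -1 < r) ha.le hlam).const_mul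
    ((11 * r + 121) / a ^ 3)).mono' (Measurable.aestronglyMeasurable ?_) ?_
  · have := (continuous_cubicPhase lam).measurable
    have := (continuous_cubicPhaseDeriv lam).measurable
    unfold remainderWeight
    fun_prop
  · filter_upwards [ae_restrict_mem measurableSet_Ioi] with y hy
    exact abs_remainderWeight_mul_exp_neg_cubicPhase_le hr ha hlam hy.out.le

lemma integral_rpow_mul_exp_neg_cubicPhase_eq (hr : 0 ≤ r) (ha : 0 < a) (hlam : 3 * lam ≤ a) :
    ∫ y in Ioi a, y ^ r * exp (-cubicPhase lam y) =
      a ^ r / cubicPhaseDeriv lam a * exp (-cubicPhase lam a) +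
        ∫ y in Ioi a, remainderWeight r lam y * exp (-cubicPhase lam y) := by
  have hg : ∀ y ∈ Ici a, 0 < cubicPhaseDeriv lam y := fun y hy =>
    cubicPhaseDeriv_pos (ha.trans_le hy) (hlam.trans hy)
  have hcancel : EqOn (fun y => y ^ r / cubicPhaseDeriv lam y * cubicPhaseDeriv lam y *
      exp (-cubicPhase lam y)) (fun y => y ^ r * exp (-cubicPhase lam y)) (Ioi a) :=
    fun y hy => by simp only [div_mul_cancel₀ _ (hg y (mem_Ici_of_Ioi hy)).ne']
  rw [← setIntegral_congr_fun measurableSet_Ioi hcancel]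
  exact integral_Ioi_mul_deriv_mul_exp_neg
    (fun y hy => hasDerivAt_rpow_div_cubicPhaseDeriv (ha.trans_le hy) (hg y hy).ne')
    (fun y _ => hasDerivAt_cubicPhase lam y)
    ((integrableOn_rpow_mul_exp_neg_cubicPhase (by linarith : -1 < r) ha.le hlam).congr_fun
      hcancel.symm measurableSet_Ioi)
    (integrableOn_remainderWeight_mul_exp_neg_cubicPhase hr ha hlam)
    (tendsto_rpow_div_cubicPhaseDeriv_mul_exp_neg_cubicPhase r lam)

lemma abs_integral_remainderWeight_mul_exp_neg_cubicPhase_le (hr : 0 ≤ r) (ha : 0 < a)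
    (hlam : 3 * lam ≤ a) :
    |∫ y in Ioi a, remainderWeight r lam y * exp (-cubicPhase lam y)| ≤
      (11 * r + 121) / a ^ 3 * ∫ y in Ioi a, y ^ r * exp (-cubicPhase lam y) := by
  rw [← integral_const_mul, ← Real.norm_eq_abs]
  refine norm_integral_le_of_norm_le
    ((integrableOn_rpow_mul_exp_neg_cubicPhase (by linarith : -1 < r) ha.le hlam).const_mul _) ?_
  filter_upwards [ae_restrict_mem measurableSet_Ioi] with y hy
  exact abs_remainderWeight_mul_exp_neg_cubicPhase_le hr ha hlam hy.out.le

lemma rpow_mul_exp_neg_cubicPhase_le (hr : 0 ≤ r) (ha : 1 ≤ a) (hlam : 3 * lam ≤ a) {y : ℝ}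
    (hay : a ≤ y) :
    y ^ r * exp (-cubicPhase lam y) ≤ 2 ^ r * a ^ r * exp (-cubicPhase lam a) *
      ((1 + (y - a) ^ r) * exp (-(cubicPhaseDeriv lam a * (y - a)))) := by
  have hpow : y ^ r ≤ a ^ r * (2 ^ r * (1 + (y - a) ^ r)) := by
    calc y ^ r ≤ (a * (1 + (y - a))) ^ r := by gcongr <;> nlinarith
      _ = a ^ r * (1 + (y - a)) ^ r := mul_rpow (by linarith) (by linarith)
      _ ≤ a ^ r * (2 ^ r * (1 + (y - a) ^ r)) := by
          gcongr
          simpa only [one_rpow] using add_rpow_le_two_rpow_mul_add zero_le_one (by linarith) hr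
  have hexp : exp (-cubicPhase lam y) ≤
      exp (-cubicPhase lam a) * exp (-(cubicPhaseDeriv lam a * (y - a))) := by
    rw [← exp_add]
    gcongr
    linarith [cubicPhase_add_cubicPhaseDeriv_mul_le (by linarith : lam ≤ 3 * a / 4) hay]
  calc y ^ r * exp (-cubicPhase lam y)
      ≤ a ^ r * (2 ^ r * (1 + (y - a) ^ r)) *
          (exp (-cubicPhase lam a) * exp (-(cubicPhaseDeriv lam a * (y - a)))) := by
        gcongr
    _ = _ := by ring

lemma integral_rpow_mul_exp_neg_cubicPhase_le (hr : 0 ≤ r) (ha : 1 ≤ a) (hlam : 3 * lam ≤ a) :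
    ∫ y in Ioi a, y ^ r * exp (-cubicPhase lam y) ≤
      2 ^ r * (1 + 11 ^ r * Gamma (r + 1)) *
        (a ^ r / cubicPhaseDeriv lam a * exp (-cubicPhase lam a)) := by
  set β := cubicPhaseDeriv lam a
  have hβ : 0 < β := cubicPhaseDeriv_pos (by linarith) hlam
  have hβ11 : 1 ≤ 11 * β := by
    nlinarith [sq_div_eleven_le_cubicPhaseDeriv (by linarith : 0 ≤ a) hlam]
  have hbound := IntegrableOn.comp_sub_Ioi a
    (integrableOn_one_add_rpow_mul_exp_neg_mul (by linarith : -1 < r) hβ)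
  calc ∫ y in Ioi a, y ^ r * exp (-cubicPhase lam y)
      ≤ ∫ y in Ioi a, 2 ^ r * a ^ r * exp (-cubicPhase lam a) *
          ((1 + (y - a) ^ r) * exp (-(β * (y - a)))) :=
        setIntegral_mono_on (integrableOn_rpow_mul_exp_neg_cubicPhase (by linarith : -1 < r)
          (by linarith) hlam) (hbound.const_mul _) measurableSet_Ioi
          fun y hy => rpow_mul_exp_neg_cubicPhase_le hr ha hlam hy.out.le
    _ = 2 ^ r * a ^ r * exp (-cubicPhase lam a) *
          ∫ s in Ioi 0, (1 + s ^ r) * exp (-(β * s)) := by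
        rw [integral_const_mul,
          setIntegral_Ioi_comp_sub (fun s => (1 + s ^ r) * exp (-(β * s))) a]
    _ ≤ 2 ^ r * a ^ r * exp (-cubicPhase lam a) * ((1 + 11 ^ r * Gamma (r + 1)) / β) := by
        gcongr
        exact integral_one_add_rpow_mul_exp_neg_mul_le hr hβ hβ11
    _ = _ := by ring

end CubicPhaseIntegral

/-- For `G_λ(y) = y³/8 − λy²/2 + λ²y/2` and any fixed `r ≥ 0` there is a
constant `C(r)` such that for all `λ` and all `a ≥ max(1, 3λ)`,
`∫_a^∞ y^r e^{−G_λ(y)} dy = (a^r/G_λ'(a)) e^{−G_λ(a)} (1+E)` with `|E| ≤ C(r)/a³`. -/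
theorem stmt8 (r : ℝ) (hr : 0 ≤ r) : ∃ C : ℝ, 0 < C ∧ ∀ lam a : ℝ,
    max 1 (3 * lam) ≤ a →
    ∃ E : ℝ, |E| ≤ C / a ^ 3 ∧
      (∫ y in Set.Ioi a, y ^ r * Real.exp (-(y ^ 3 / 8 - lam * y ^ 2 / 2 + lam ^ 2 * y / 2)))
        = a ^ r / (3 * a ^ 2 / 8 - lam * a + lam ^ 2 / 2) *
            Real.exp (-(a ^ 3 / 8 - lam * a ^ 2 / 2 + lam ^ 2 * a / 2)) * (1 + E) := by
  refine ⟨(11 * r + 121) * (2 ^ r * (1 + 11 ^ r * Gamma (r + 1))), by positivity,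
    fun lam a ha => ?_⟩
  have ha1 : 1 ≤ a := le_of_max_le_left ha
  have hlam : 3 * lam ≤ a := le_of_max_le_right ha
  have ha0 : 0 < a := by linarith
  have hL : 0 < a ^ r / cubicPhaseDeriv lam a * exp (-cubicPhase lam a) := by
    have := cubicPhaseDeriv_pos ha0 hlam
    positivity
  have hrem := abs_integral_remainderWeight_mul_exp_neg_cubicPhase_le hr ha0 hlam
  rw [← add_sub_cancel_left (a ^ r / cubicPhaseDeriv lam a * exp (-cubicPhase lam a))
    (∫ y in Ioi a, _), ← integral_rpow_mul_exp_neg_cubicPhase_eq hr ha0 hlam] at hrem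
  obtain ⟨E, hE, hEq⟩ := exists_eq_mul_one_add_of_abs_sub_le hL (by positivity) hrem
    (integral_rpow_mul_exp_neg_cubicPhase_le hr ha1 hlam)
  exact ⟨E, hE.trans_eq (by ring), hEq⟩
end

section
/- There exists a finite constant c such that for all integers 1 ≤ k ≤ n−1, binom(n,k) ≤ c · n^k / k^{k+1/2} · exp(k − k^2/(2n) − k^3/(6n^2)). -/
open Finset Real

/-- `1 - x ≤ exp (-(x + x^2/2))` for `0 ≤ x`. -/
lemma aux_one_sub_le_exp {x : ℝ} (hx : 0 ≤ x) :
    1 - x ≤ Real.exp (-(x + x ^ 2 / 2)) := by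
  rcases le_or_gt 1 x with h | h
  · exact le_trans (by linarith) (Real.exp_pos _).le
  · have hlog : x + x ^ 2 / 2 ≤ -Real.log (1 - x) := by
      have hs := Real.hasSum_pow_div_log_of_abs_lt_one (x := x)
        (by rwa [abs_of_nonneg hx])
      have hle := sum_le_hasSum (Finset.range 2)
        (fun i _ => by positivity) hs
      have : ∑ i ∈ Finset.range 2, x ^ (i + 1) / ((i : ℝ) + 1) = x + x ^ 2 / 2 := by
        simp [Finset.sum_range_succ]
        ring
      linarith [this ▸ hle]
    have h1x : (0:ℝ) < 1 - x := by linarith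
    calc 1 - x = Real.exp (Real.log (1 - x)) := (Real.exp_log h1x).symm
      _ ≤ Real.exp (-(x + x ^ 2 / 2)) := Real.exp_le_exp.mpr (by linarith)

/-- Stirling lower bound: `√k * (k/e)^k ≤ k!` for `k ≥ 1`. -/
lemma aux_factorial_lb {k : ℕ} (hk : 1 ≤ k) :
    Real.sqrt k * ((k : ℝ) / Real.exp 1) ^ k ≤ (k.factorial : ℝ) := by
  have hT : Filter.Tendsto (Stirling.stirlingSeq ∘ Nat.succ) Filter.atTop
      (nhds (Real.sqrt π)) :=
    Stirling.tendsto_stirlingSeq_sqrt_pi.comp (Filter.tendsto_add_atTop_nat 1)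
  obtain ⟨m, rfl⟩ : ∃ m, k = m + 1 := ⟨k - 1, by omega⟩
  have hge : Real.sqrt π ≤ Stirling.stirlingSeq (m + 1) :=
    Stirling.stirlingSeq'_antitone.le_of_tendsto hT m
  have hkpos : (0:ℝ) < ((m + 1 : ℕ) : ℝ) := by positivity
  have hpos : 0 < Real.sqrt (2 * ((m + 1 : ℕ) : ℝ)) * (((m + 1 : ℕ) : ℝ) / Real.exp 1) ^ (m + 1) := by
    positivity
  have h1 : Real.sqrt π * (Real.sqrt (2 * ((m + 1 : ℕ) : ℝ)) * (((m + 1 : ℕ) : ℝ) / Real.exp 1) ^ (m + 1))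
      ≤ ((m + 1).factorial : ℝ) := by
    rw [Stirling.stirlingSeq, le_div_iff₀ hpos] at hge
    exact hge
  refine le_trans ?_ h1
  have hs : Real.sqrt ((m + 1 : ℕ) : ℝ) ≤ Real.sqrt π * Real.sqrt (2 * ((m + 1 : ℕ) : ℝ)) := by
    rw [← Real.sqrt_mul pi_nonneg]
    apply Real.sqrt_le_sqrt
    nlinarith [Real.pi_gt_three]
  calc Real.sqrt ((m + 1 : ℕ) : ℝ) * (((m + 1 : ℕ) : ℝ) / Real.exp 1) ^ (m + 1)
      ≤ (Real.sqrt π * Real.sqrt (2 * ((m + 1 : ℕ) : ℝ))) * (((m + 1 : ℕ) : ℝ) / Real.exp 1) ^ (m + 1) :=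
        mul_le_mul_of_nonneg_right hs (by positivity)
    _ = Real.sqrt π * (Real.sqrt (2 * ((m + 1 : ℕ) : ℝ)) * (((m + 1 : ℕ) : ℝ) / Real.exp 1) ^ (m + 1)) := by
        ring

lemma aux_sum_id (k : ℕ) : ∑ i ∈ range k, (i : ℝ) = k * (k - 1) / 2 := by
  induction k with
  | zero => simp
  | succ m ih => rw [sum_range_succ, ih]; push_cast; ring

lemma aux_sum_sq (k : ℕ) : ∑ i ∈ range k, (i : ℝ) ^ 2 = k * (k - 1) * (2 * k - 1) / 6 := by
  induction k with
  | zero => simp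
  | succ m ih => rw [sum_range_succ, ih]; push_cast; ring

/-- There is a finite constant `c` such that for all `1 ≤ k ≤ n − 1`,
`C(n,k) ≤ c · n^k / k^{k+1/2} · exp(k − k²/(2n) − k³/(6n²))`. -/
theorem stmt11 : ∃ c : ℝ, 0 < c ∧ ∀ n k : ℕ, 1 ≤ k → k ≤ n - 1 →
    (n.choose k : ℝ) ≤
      c * (n : ℝ) ^ k / (k : ℝ) ^ ((k : ℝ) + 1 / 2) *
        Real.exp ((k : ℝ) - (k : ℝ) ^ 2 / (2 * n) - (k : ℝ) ^ 3 / (6 * (n : ℝ) ^ 2)) := by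
  refine ⟨Real.exp 1, Real.exp_pos 1, fun n k hk hkn => ?_⟩
  have hkltn : k < n := by omega
  have hnR : (1:ℝ) ≤ (n:ℝ) := by exact_mod_cast Nat.one_le_iff_ne_zero.mpr (by omega)
  have hkR : (1:ℝ) ≤ (k:ℝ) := by exact_mod_cast hk
  have hknR : (k:ℝ) ≤ (n:ℝ) := by exact_mod_cast hkltn.le
  have hnpos : (0:ℝ) < n := by linarith
  have hkpos : (0:ℝ) < k := by linarith
  -- choose n k = descFactorial / k!
  have hchoose : (n.choose k : ℝ) = (n.descFactorial k : ℝ) / (k.factorial : ℝ) := by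
    rw [Nat.descFactorial_eq_factorial_mul_choose]
    push_cast
    field_simp
  -- descFactorial as a real product
  have hdesc : (n.descFactorial k : ℝ) = ∏ i ∈ range k, ((n : ℝ) - i) := by
    rw [Nat.descFactorial_eq_prod_range, Nat.cast_prod]
    refine Finset.prod_congr rfl fun i hi => ?_
    exact Nat.cast_sub (le_of_lt (lt_of_lt_of_le (mem_range.mp hi) hkltn.le))
  -- bound the product
  have hprod : ∏ i ∈ range k, ((n : ℝ) - i)
      ≤ (n:ℝ) ^ k * Real.exp (∑ i ∈ range k, (-((i:ℝ)/n + ((i:ℝ)/n) ^ 2 / 2))) := by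
    have hb : ∏ i ∈ range k, ((n : ℝ) - i)
        ≤ ∏ i ∈ range k, ((n:ℝ) * Real.exp (-((i:ℝ)/n + ((i:ℝ)/n) ^ 2 / 2))) := by
      apply Finset.prod_le_prod
      · intro i hi
        have : (i:ℝ) ≤ (n:ℝ) := by
          exact_mod_cast (lt_of_lt_of_le (mem_range.mp hi) hkltn.le).le
        linarith
      · intro i hi
        have hin : (0:ℝ) ≤ (i:ℝ)/n := by positivity
        calc (n:ℝ) - i = (n:ℝ) * (1 - (i:ℝ)/n) := by field_simp
          _ ≤ (n:ℝ) * Real.exp (-((i:ℝ)/n + ((i:ℝ)/n) ^ 2 / 2)) :=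
              mul_le_mul_of_nonneg_left (aux_one_sub_le_exp hin) hnpos.le
    calc ∏ i ∈ range k, ((n : ℝ) - i)
        ≤ ∏ i ∈ range k, ((n:ℝ) * Real.exp (-((i:ℝ)/n + ((i:ℝ)/n) ^ 2 / 2))) := hb
      _ = (n:ℝ) ^ k * Real.exp (∑ i ∈ range k, (-((i:ℝ)/n + ((i:ℝ)/n) ^ 2 / 2))) := by
          rw [Finset.prod_mul_distrib, Finset.prod_const, Finset.card_range, ← Real.exp_sum]
  -- evaluate the sum
  have hsum : ∑ i ∈ range k, (-((i:ℝ)/n + ((i:ℝ)/n) ^ 2 / 2))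
      = -((k:ℝ) * (k - 1) / 2 / n + (k:ℝ) * (k - 1) * (2 * k - 1) / 12 / n ^ 2) := by
    have h1 := aux_sum_id k
    have h2 := aux_sum_sq k
    have hstep : ∀ i ∈ range k, (-((i:ℝ)/n + ((i:ℝ)/n) ^ 2 / 2))
        = -(1/(n:ℝ)) * (i:ℝ) + (-(1/(2 * (n:ℝ)^2))) * (i:ℝ)^2 := by
      intro i _
      field_simp
      ring
    rw [Finset.sum_congr rfl hstep, Finset.sum_add_distrib, ← Finset.mul_sum, ← Finset.mul_sum,
      h1, h2]
    field_simp
    ring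
  -- compare exponents
  have hexp : Real.exp (-((k:ℝ) * (k - 1) / 2 / n + (k:ℝ) * (k - 1) * (2 * k - 1) / 12 / n ^ 2))
      ≤ Real.exp 1 * Real.exp (-((k:ℝ) ^ 2 / (2 * n)) - (k:ℝ) ^ 3 / (6 * (n:ℝ) ^ 2)) := by
    rw [← Real.exp_add]
    apply Real.exp_le_exp.mpr
    have hn2 : (0:ℝ) < (n:ℝ)^2 := by positivity
    have key : (k:ℝ) ^ 2 / (2 * n) - (k:ℝ) * (k - 1) / 2 / n ≤ 1/2 := by
      rw [div_div, div_sub_div_same, div_le_iff₀ (by positivity)]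
      nlinarith
    have key2 : (k:ℝ) ^ 3 / (6 * (n:ℝ) ^ 2) - (k:ℝ) * (k - 1) * (2 * k - 1) / 12 / n ^ 2 ≤ 1/2 := by
      rw [div_div, show (k:ℝ) ^ 3 / (6 * (n:ℝ) ^ 2) = 2 * (k:ℝ) ^ 3 / (12 * n ^ 2) by ring,
        div_sub_div_same, div_le_iff₀ (by positivity)]
      nlinarith
    linarith
  -- factorial lower bound in the right shape
  have hfacshape : (k:ℝ) ^ ((k : ℝ) + 1 / 2) * Real.exp (-(k:ℝ))
      = Real.sqrt k * ((k : ℝ) / Real.exp 1) ^ k := by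
    rw [Real.rpow_add hkpos, Real.rpow_natCast, div_pow, Real.exp_one_pow,
      Real.exp_neg, Real.sqrt_eq_rpow]
    have hek : Real.exp (k:ℝ) ≠ 0 := (Real.exp_pos _).ne'
    field_simp
  have hfac : (k:ℝ) ^ ((k : ℝ) + 1 / 2) * Real.exp (-(k:ℝ)) ≤ (k.factorial : ℝ) := by
    rw [hfacshape]; exact aux_factorial_lb hk
  have hApos : (0:ℝ) < (k:ℝ) ^ ((k : ℝ) + 1 / 2) * Real.exp (-(k:ℝ)) := by positivity
  -- combine
  have hdescnonneg : (0:ℝ) ≤ (n.descFactorial k : ℝ) := by positivity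
  have step1 : (n.choose k : ℝ)
      ≤ (n.descFactorial k : ℝ) / ((k:ℝ) ^ ((k : ℝ) + 1 / 2) * Real.exp (-(k:ℝ))) := by
    rw [hchoose]
    exact div_le_div_of_nonneg_left hdescnonneg hApos hfac
  have step2 : (n.descFactorial k : ℝ)
      ≤ (n:ℝ) ^ k * (Real.exp 1 * Real.exp (-((k:ℝ) ^ 2 / (2 * n)) - (k:ℝ) ^ 3 / (6 * (n:ℝ) ^ 2))) := by
    calc (n.descFactorial k : ℝ)
        ≤ (n:ℝ) ^ k * Real.exp (∑ i ∈ range k, (-((i:ℝ)/n + ((i:ℝ)/n) ^ 2 / 2))) :=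
          hdesc ▸ hprod
      _ ≤ (n:ℝ) ^ k * (Real.exp 1 * Real.exp (-((k:ℝ) ^ 2 / (2 * n)) - (k:ℝ) ^ 3 / (6 * (n:ℝ) ^ 2))) := by
          apply mul_le_mul_of_nonneg_left _ (by positivity)
          rw [hsum]
          exact hexp
  have hKpos : (0:ℝ) < (k:ℝ) ^ ((k : ℝ) + 1 / 2) := by positivity
  have final : (n:ℝ) ^ k * (Real.exp 1 * Real.exp (-((k:ℝ) ^ 2 / (2 * n)) - (k:ℝ) ^ 3 / (6 * (n:ℝ) ^ 2)))
        / ((k:ℝ) ^ ((k : ℝ) + 1 / 2) * Real.exp (-(k:ℝ)))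
      = Real.exp 1 * (n : ℝ) ^ k / (k : ℝ) ^ ((k : ℝ) + 1 / 2) *
        Real.exp ((k : ℝ) - (k : ℝ) ^ 2 / (2 * n) - (k : ℝ) ^ 3 / (6 * (n : ℝ) ^ 2)) := by
    rw [show (k : ℝ) - (k : ℝ) ^ 2 / (2 * n) - (k : ℝ) ^ 3 / (6 * (n : ℝ) ^ 2)
        = (k:ℝ) + (-((k:ℝ) ^ 2 / (2 * n)) - (k:ℝ) ^ 3 / (6 * (n:ℝ) ^ 2)) by ring,
      Real.exp_add, Real.exp_neg]
    field_simp
  calc (n.choose k : ℝ)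
      ≤ (n.descFactorial k : ℝ) / ((k:ℝ) ^ ((k : ℝ) + 1 / 2) * Real.exp (-(k:ℝ))) := step1
    _ ≤ (n:ℝ) ^ k * (Real.exp 1 * Real.exp (-((k:ℝ) ^ 2 / (2 * n)) - (k:ℝ) ^ 3 / (6 * (n:ℝ) ^ 2)))
        / ((k:ℝ) ^ ((k : ℝ) + 1 / 2) * Real.exp (-(k:ℝ))) :=
        by gcongr
    _ = _ := final
end

section
/- Suppose 0 < c_1 ≤ c_2 < ∞, M > 0, k, n positive integers with k ≤ M n^{2/3}, and assume c_1 (e/(12(l∨1)))^{l/2} k^{k+(3l−1)/2} ≤ C(k,k+l) ≤ c_2 (e/(12(l∨1)))^{l/2} k^{k+(3l−1)/2} for all −1 ≤ l ≤ L where L ≤ 4k^{1/2}. Then there exist constants 0 < c_1' ≤ c_2' < ∞ depending only on M, c_1, c_2 such that c_1' k^{k−2} n ≤ Σ_{l=−1}^{L} C(k,k+l)/n^l ≤ c_2' k^{k−2} n. -/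
/-!
With `ρ = k^{3/2}/n ≤ M^{3/2}` and `w_l = (e/(12(l∨1)))^{l/2}`, the `l`-th summand lies between
`c₁` and `c₂` times `k^{k-2} n · w_l ρ^{l+1}`. The `l = -1` summand alone gives the lower bound.
For the upper bound, `t ≤ exp (t/e)` turns into `(A/l)^{l/2} ≤ exp (2A/e) 2^{-l}`, so `w_l ρ^{l+1}`
is dominated by a geometric sequence of ratio `1/2` whose constant depends only on `M`.
-/

open Real Finset

noncomputable def excessWeight (l : ℤ) : ℝ := (exp 1 / (12 * max (l : ℝ) 1)) ^ ((l : ℝ) / 2)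

lemma excessWeight_pos (l : ℤ) : 0 < excessWeight l :=
  rpow_pos_of_pos (div_pos (exp_pos 1) (by positivity)) _

lemma rpow_half_le_exp_mul_half_pow {A x : ℝ} (hA : 0 < A) (hx : 0 < x) :
    (A / x) ^ (x / 2) ≤ exp (2 * A / exp 1) * (1 / 2) ^ x := by
  have ht : 4 * A / x ≤ exp (4 * A / x / exp 1) := by
    simpa [mul_div_cancel₀ _ (exp_pos 1).ne'] using exp_one_mul_le_exp (x := 4 * A / x / exp 1)
  have hquarter : (1 / 2 : ℝ) ^ x = (1 / 4) ^ (x / 2) := by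
    rw [show (1 / 4 : ℝ) = (1 / 2) ^ (2 : ℝ) by norm_num, ← rpow_mul (by norm_num)]
    ring_nf
  calc (A / x) ^ (x / 2) = (4 * A / x) ^ (x / 2) * (1 / 2) ^ x := by
        rw [hquarter, ← mul_rpow (by positivity) (by norm_num)]
        ring_nf
    _ ≤ exp (4 * A / x / exp 1) ^ (x / 2) * (1 / 2) ^ x := by gcongr
    _ = exp (2 * A / exp 1) * (1 / 2) ^ x := by
        rw [← exp_mul]; congr 2; field_simp; ring

lemma excessWeight_mul_rpow_le {B : ℝ} (hB : 0 < B) {l : ℤ} (hl : -1 ≤ l) :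
    excessWeight l * B ^ ((l : ℝ) + 1)
      ≤ (excessWeight (-1) + 2 * B * exp (B ^ 2 / 6)) * (1 / 2) ^ ((l : ℝ) + 1) := by
  obtain rfl | hl0 := hl.eq_or_lt
  · simp only [Int.reduceNeg, Int.cast_neg, Int.cast_one, neg_add_cancel, rpow_zero, mul_one,
      le_add_iff_nonneg_right]
    positivity
  have hsplit : excessWeight l * B ^ ((l : ℝ) + 1)
      = B * (exp 1 * B ^ 2 / 12 / max (l : ℝ) 1) ^ ((l : ℝ) / 2) := by
    have hB2 : B ^ ((l : ℝ) + 1) = B * (B ^ 2) ^ ((l : ℝ) / 2) := by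
      rw [← rpow_natCast, ← rpow_mul hB.le, rpow_add hB, rpow_one]; push_cast; ring_nf
    rw [hB2, excessWeight, mul_left_comm, ← mul_rpow (by positivity) (by positivity)]
    ring_nf
  have hexp : 1 ≤ exp (B ^ 2 / 6) := one_le_exp (by positivity)
  have hmain : B * (exp 1 * B ^ 2 / 12 / max (l : ℝ) 1) ^ ((l : ℝ) / 2)
      ≤ B * exp (B ^ 2 / 6) * (1 / 2) ^ (l : ℝ) := by
    obtain rfl | hlpos := (show (0 : ℤ) ≤ l by omega).eq_or_lt
    · simpa using le_mul_of_one_le_right hB.le hexp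
    have hl1 : (1 : ℝ) ≤ l := by exact_mod_cast hlpos
    rw [max_eq_left hl1, mul_assoc]
    gcongr
    refine (rpow_half_le_exp_mul_half_pow (by positivity) (by linarith)).trans_eq ?_
    congr 2
    field_simp
    ring
  rw [hsplit, rpow_add_one (by norm_num)]
  nlinarith [excessWeight_pos (-1), rpow_pos_of_pos (by norm_num : (0:ℝ) < 1 / 2) (l : ℝ)]

lemma sum_pow_le_inv_one_sub_of_injOn {ι : Type*} {s : Finset ι} {f : ι → ℕ}
    (hf : Set.InjOn f s) {q : ℝ} (hq0 : 0 ≤ q) (hq1 : q < 1) :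
    ∑ i ∈ s, q ^ f i ≤ (1 - q)⁻¹ := by
  rw [← sum_image hf, ← tsum_geometric_of_lt_one hq0 hq1]
  exact (summable_geometric_of_lt_one hq0 hq1).sum_le_tsum _ fun i _ => pow_nonneg hq0 i

lemma sum_Icc_rpow_add_one_le {q : ℝ} (hq0 : 0 ≤ q) (hq1 : q < 1) (L : ℤ) :
    ∑ l ∈ Icc (-1 : ℤ) L, q ^ ((l : ℝ) + 1) ≤ (1 - q)⁻¹ := by
  calc ∑ l ∈ Icc (-1 : ℤ) L, q ^ ((l : ℝ) + 1) = ∑ l ∈ Icc (-1 : ℤ) L, q ^ (l + 1).toNat := by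
        refine sum_congr rfl fun l hl => ?_
        have hcast : (((l + 1).toNat : ℕ) : ℝ) = (l : ℝ) + 1 := by
          exact_mod_cast Int.toNat_of_nonneg (by linarith [(mem_Icc.1 hl).1])
        rw [← rpow_natCast, hcast]
    _ ≤ (1 - q)⁻¹ :=
        sum_pow_le_inv_one_sub_of_injOn (fun a ha b hb h => by simp at ha hb h; omega) hq0 hq1

noncomputable def excessSeriesBound (B : ℝ) : ℝ := 2 * (excessWeight (-1) + 2 * B * exp (B ^ 2 / 6))

lemma excessWeight_neg_one_le_excessSeriesBound {B : ℝ} (hB : 0 ≤ B) :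
    excessWeight (-1) ≤ excessSeriesBound B := by
  have := excessWeight_pos (-1)
  have : 0 ≤ 2 * B * exp (B ^ 2 / 6) := by positivity
  unfold excessSeriesBound
  linarith

lemma le_sum_Icc_of_excessWeight_le {a : ℤ → ℝ} {D ρ : ℝ} (hD : 0 ≤ D) (hρ : 0 ≤ ρ) {L : ℤ}
    (hL : -1 ≤ L) (ha : ∀ l ∈ Icc (-1 : ℤ) L, D * (excessWeight l * ρ ^ ((l : ℝ) + 1)) ≤ a l) :
    D * excessWeight (-1) ≤ ∑ l ∈ Icc (-1 : ℤ) L, a l := by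
  have hmem : (-1 : ℤ) ∈ Icc (-1 : ℤ) L := mem_Icc.2 ⟨le_rfl, hL⟩
  calc D * excessWeight (-1) = D * (excessWeight (-1) * ρ ^ (((-1 : ℤ) : ℝ) + 1)) := by simp
    _ ≤ a (-1) := ha _ hmem
    _ ≤ ∑ l ∈ Icc (-1 : ℤ) L, a l :=
      single_le_sum (fun l hl => le_trans (by have := excessWeight_pos l; positivity) (ha l hl)) hmem

lemma sum_Icc_le_of_le_excessWeight {a : ℤ → ℝ} {D ρ B : ℝ} (hD : 0 ≤ D) (hρ : 0 ≤ ρ)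
    (hρB : ρ ≤ B) (hB : 0 < B) (L : ℤ)
    (ha : ∀ l ∈ Icc (-1 : ℤ) L, a l ≤ D * (excessWeight l * ρ ^ ((l : ℝ) + 1))) :
    ∑ l ∈ Icc (-1 : ℤ) L, a l ≤ D * excessSeriesBound B := by
  set R := excessWeight (-1) + 2 * B * exp (B ^ 2 / 6)
  have hR : 0 ≤ R := by have := excessWeight_pos (-1); positivity
  have hgeom := sum_Icc_rpow_add_one_le (q := 1 / 2) (by norm_num) (by norm_num) L
  calc ∑ l ∈ Icc (-1 : ℤ) L, a l ≤ ∑ l ∈ Icc (-1 : ℤ) L, D * R * (1 / 2) ^ ((l : ℝ) + 1) := by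
        refine sum_le_sum fun l hl => (ha l hl).trans ?_
        have hl : -1 ≤ l := (mem_Icc.1 hl).1
        have hexp : (0 : ℝ) ≤ (l : ℝ) + 1 := by
          have : (-1 : ℝ) ≤ l := by exact_mod_cast hl
          linarith
        rw [mul_assoc]
        refine mul_le_mul_of_nonneg_left ?_ hD
        exact (mul_le_mul_of_nonneg_left (rpow_le_rpow hρ hρB hexp)
          (excessWeight_pos l).le).trans (excessWeight_mul_rpow_le hB hl)
    _ = D * R * ∑ l ∈ Icc (-1 : ℤ) L, (1 / 2 : ℝ) ^ ((l : ℝ) + 1) := (mul_sum _ _ _).symm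
    _ ≤ D * R * (1 - 1 / 2)⁻¹ := mul_le_mul_of_nonneg_left hgeom (mul_nonneg hD hR)
    _ = D * excessSeriesBound B := by
      rw [excessSeriesBound]; norm_num; ring

lemma rpow_add_div_zpow_eq {k n : ℝ} (hk : 0 < k) (hn : 0 < n) (a : ℝ) (l : ℤ) :
    k ^ (a + (3 * (l : ℝ) - 1) / 2) / n ^ l
      = k ^ (a - 2) * n * (k ^ (3 / 2 : ℝ) / n) ^ ((l : ℝ) + 1) := by
  have hk' : k ^ (a + (3 * (l : ℝ) - 1) / 2) = k ^ (a - 2) * k ^ (3 / 2 * ((l : ℝ) + 1)) := by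
    rw [← rpow_add hk]; ring_nf
  have hn' : n ^ ((l : ℝ) + 1) = n ^ l * n := by rw [rpow_add hn, rpow_one, rpow_intCast]
  have := hn.ne'
  rw [div_rpow (by positivity) hn.le, ← rpow_mul hk.le, hk', hn']
  field_simp

lemma rpow_three_halves_div_le {k n M : ℝ} (hk : 0 ≤ k) (hn : 0 < n) (hM : 0 ≤ M)
    (h : k ≤ M * n ^ (2 / 3 : ℝ)) : k ^ (3 / 2 : ℝ) / n ≤ M ^ (3 / 2 : ℝ) := by
  rw [div_le_iff₀ hn]
  calc k ^ (3 / 2 : ℝ) ≤ (M * n ^ (2 / 3 : ℝ)) ^ (3 / 2 : ℝ) := by gcongr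
    _ = M ^ (3 / 2 : ℝ) * n := by
      rw [mul_rpow hM (by positivity), ← rpow_mul hn.le]; norm_num

/-- If `C(k,k+l)` satisfies two-sided bounds
`c₁ (e/(12(l∨1)))^{l/2} k^{k+(3l−1)/2} ≤ C(k,k+l) ≤ c₂ (e/(12(l∨1)))^{l/2} k^{k+(3l−1)/2}`
for `−1 ≤ l ≤ L` with `L ≤ 4k^{1/2}`, and `k ≤ M n^{2/3}`, then
`Σ_{l=−1}^L C(k,k+l)/n^l` is bounded above and below by constant multiples
(depending only on `M, c₁, c₂`) of `k^{k−2} n`. -/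
theorem stmt18 (M c₁ c₂ : ℝ) (hM : 0 < M) (hc₁ : 0 < c₁) (hc₁₂ : c₁ ≤ c₂) :
    ∃ c₁' c₂' : ℝ, 0 < c₁' ∧ c₁' ≤ c₂' ∧
      ∀ (n k : ℕ) (L : ℤ) (C : ℤ → ℝ), 1 ≤ n → 1 ≤ k →
        (k : ℝ) ≤ M * (n : ℝ) ^ ((2 : ℝ) / 3) →
        (-1 : ℤ) ≤ L → (L : ℝ) ≤ 4 * (k : ℝ) ^ ((1 : ℝ) / 2) →
        (∀ l ∈ Finset.Icc (-1 : ℤ) L,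
          c₁ * (Real.exp 1 / (12 * (max (l : ℝ) 1))) ^ ((l : ℝ) / 2) *
              (k : ℝ) ^ ((k : ℝ) + (3 * (l : ℝ) - 1) / 2) ≤ C l ∧
          C l ≤ c₂ * (Real.exp 1 / (12 * (max (l : ℝ) 1))) ^ ((l : ℝ) / 2) *
              (k : ℝ) ^ ((k : ℝ) + (3 * (l : ℝ) - 1) / 2)) →
        c₁' * (k : ℝ) ^ ((k : ℝ) - 2) * n ≤ (∑ l ∈ Finset.Icc (-1 : ℤ) L, C l / (n : ℝ) ^ l)
          ∧ (∑ l ∈ Finset.Icc (-1 : ℤ) L, C l / (n : ℝ) ^ l) ≤ c₂' * (k : ℝ) ^ ((k : ℝ) - 2) * n := by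
  have hB : 0 < M ^ (3 / 2 : ℝ) := rpow_pos_of_pos hM _
  have hw := excessWeight_pos (-1)
  refine ⟨c₁ * excessWeight (-1), c₂ * excessSeriesBound (M ^ (3 / 2 : ℝ)), mul_pos hc₁ hw,
    mul_le_mul hc₁₂ (excessWeight_neg_one_le_excessSeriesBound hB.le) hw.le (hc₁.trans_le hc₁₂).le,
    ?_⟩
  intro n k L C hn hk hkM hL _ hC
  have hn0 : (0 : ℝ) < n := by exact_mod_cast hn
  have hk0 : (0 : ℝ) < k := by exact_mod_cast hk
  set S := (k : ℝ) ^ ((k : ℝ) - 2) * n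
  have hS : 0 ≤ S := by positivity
  have hterm (l : ℤ) (hl : l ∈ Icc (-1 : ℤ) L) :
      c₁ * S * (excessWeight l * ((k : ℝ) ^ (3 / 2 : ℝ) / n) ^ ((l : ℝ) + 1)) ≤ C l / n ^ l ∧
      C l / n ^ l ≤ c₂ * S * (excessWeight l * ((k : ℝ) ^ (3 / 2 : ℝ) / n) ^ ((l : ℝ) + 1)) := by
    have hscale (c : ℝ) : c * excessWeight l * (k : ℝ) ^ ((k : ℝ) + (3 * (l : ℝ) - 1) / 2) / n ^ l
        = c * S * (excessWeight l * ((k : ℝ) ^ (3 / 2 : ℝ) / n) ^ ((l : ℝ) + 1)) := by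
      rw [mul_div_assoc, rpow_add_div_zpow_eq hk0 hn0]; ring
    rw [← hscale, ← hscale]
    exact ⟨div_le_div_of_nonneg_right (hC l hl).1 (zpow_pos hn0 l).le,
      div_le_div_of_nonneg_right (hC l hl).2 (zpow_pos hn0 l).le⟩
  have hρ : (0 : ℝ) ≤ (k : ℝ) ^ (3 / 2 : ℝ) / n := by positivity
  constructor
  · have := le_sum_Icc_of_excessWeight_le (mul_nonneg hc₁.le hS) hρ hL fun l hl => (hterm l hl).1
    linarith
  · have := sum_Icc_le_of_le_excessWeight (mul_nonneg (hc₁.le.trans hc₁₂) hS) hρ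
      (rpow_three_halves_div_le hk0.le hn0 hM.le hkM) hB L
      fun l hl => (hterm l hl).2
    linarith
end
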